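/- arXiv:1807.03712 — 4 statements merged into one kernel-verified Lean document; each statement's English description precedes it below -/
import Mathlib

section
/- The Kullback–Leibler divergence decomposes as D_KL(ν ‖ ν_r) = D_KL(ν ‖ ν_r*) + D_KL(ν_r* ‖ ν_r). In particular, D_KL(ν ‖ ν_r) ≥ D_KL(ν ‖ ν_r*) for every Borel function g : ℝ^d → ℝ₊, so any g* with g* ∘ P_r = E_μ(f | σ(P_r)) minimizes g ↦ D_KL(ν ‖ ν_r) over Borel profile functions g. -/
open MeasureTheory Matrix

-- Kullback–Leibler divergence: `∫ log (dν₁/dν₂) dν₁` when `ν₁ ≪ ν₂` (and the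
-- logarithm of the density is `ν₁`-integrable), and `+∞` otherwise.
open scoped Classical in
noncomputable def klDiv {α : Type*} [MeasurableSpace α] (ν₁ ν₂ : Measure α) : EReal :=
  if ν₁ ≪ ν₂ ∧ Integrable (fun x => Real.log (ν₁.rnDeriv ν₂ x).toReal) ν₁ then
    ((∫ x, Real.log (ν₁.rnDeriv ν₂ x).toReal ∂ν₁ : ℝ) : EReal)
  else ⊤

/-- The probability measure with density proportional to `f` with respect to `μ`. -/
noncomputable def normWithDensity {α : Type*} [MeasurableSpace α] (μ : Measure α)
    (f : α → ℝ) : Measure α :=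
  (ENNReal.ofReal (∫ x, f x ∂μ))⁻¹ • μ.withDensity (fun x => ENNReal.ofReal (f x))

/-!
Let `ν ∝ f μ`, `ν* ∝ μ[f|m] μ` and `ν_r ∝ g μ` with `g` measurable for `m = σ(P_r)`. Since
`∫_A f dμ = ∫_A μ[f|m] dμ` for `A ∈ m`, the measures `ν` and `ν*` agree on `m`, and `ν ≪ ν*`.
If `ν* ≪ ν_r`, then `dν*/dν_r ∝ μ[f|m]/g` is `m`-measurable, so
`log dν/dν_r = log dν/dν* + log dν*/dν_r` `ν`-a.e., and the last term has the same integral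
under `ν` and `ν*`. Integrability of the pieces comes from the data processing inequality:
`KL(ν*‖ν_r) = KL(ν*|_m‖ν_r|_m) = KL(ν|_m‖ν_r|_m) ≤ KL(ν‖ν_r)`. If `ν* ≪ ν_r` fails, the set
`{g = 0} ∈ m` shows that `ν ≪ ν_r` fails too, and both sides are infinite. On probability measures
the `EReal`-valued divergence is the `ℝ≥0∞`-valued one of Mathlib (Gibbs' inequality), so the
decomposition yields the inequality.
-/

open scoped ENNReal

section TrimEq

variable {α E : Type*} {m m0 : MeasurableSpace α} {μ ν : Measure α}
  [NormedAddCommGroup E] {h : α → E}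

lemma integrable_iff_of_trim_eq (hm : m ≤ m0) (htrim : μ.trim hm = ν.trim hm)
    (hh : StronglyMeasurable[m] h) : Integrable h μ ↔ Integrable h ν :=
  ⟨fun hi ↦ integrable_of_integrable_trim hm (htrim ▸ hi.trim hm hh),
    fun hi ↦ integrable_of_integrable_trim hm (htrim ▸ hi.trim hm hh)⟩

lemma integral_eq_of_trim_eq [NormedSpace ℝ E] (hm : m ≤ m0) (htrim : μ.trim hm = ν.trim hm)
    (hh : StronglyMeasurable[m] h) : ∫ x, h x ∂μ = ∫ x, h x ∂ν := by
  rw [integral_trim hm hh, htrim, ← integral_trim hm hh]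

end TrimEq

-- Inside this namespace `klDiv` is Mathlib's `ℝ≥0∞`-valued divergence, not the one above.
namespace InformationTheory

variable {α : Type*} {m m0 : MeasurableSpace α} {μ ν κ : Measure α} {ρ : α → ℝ≥0∞}

lemma klDiv_withDensity_eq_lintegral [IsFiniteMeasure κ] [IsFiniteMeasure (κ.withDensity ρ)]
    (hρ : Measurable ρ) :
    klDiv (κ.withDensity ρ) κ = ∫⁻ x, ENNReal.ofReal (klFun (ρ x).toReal) ∂κ := by
  rw [klDiv_eq_lintegral_klFun_of_ac (withDensity_absolutelyContinuous κ ρ)]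
  refine lintegral_congr_ae ?_
  filter_upwards [Measure.rnDeriv_withDensity κ hρ] with x hx
  rw [hx]

lemma klDiv_trim_withDensity (hm : m ≤ m0) [IsFiniteMeasure κ]
    [IsFiniteMeasure (κ.withDensity ρ)] (hρ : Measurable[m] ρ) :
    klDiv ((κ.withDensity ρ).trim hm) (κ.trim hm) = klDiv (κ.withDensity ρ) κ := by
  have : IsFiniteMeasure ((κ.trim hm).withDensity ρ) := trim_withDensity hm hρ ▸ inferInstance
  rw [trim_withDensity hm hρ, klDiv_withDensity_eq_lintegral hρ,
    klDiv_withDensity_eq_lintegral (hρ.mono hm le_rfl), lintegral_trim hm]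
  exact (measurable_klFun.comp hρ.ennreal_toReal).ennreal_ofReal

lemma klDiv_le_of_trim_eq (hm : m ≤ m0) [IsFiniteMeasure μ] [IsFiniteMeasure ν]
    [IsFiniteMeasure κ] (hρ : Measurable[m] ρ) (hν : ν = κ.withDensity ρ)
    (htrim : μ.trim hm = ν.trim hm) :
    klDiv ν κ ≤ klDiv μ κ := by
  subst hν
  rw [← klDiv_trim_withDensity hm hρ, ← htrim]
  exact klDiv_trim_le μ κ hm

lemma llr_withDensity_ae_eq [SigmaFinite κ] (hρ : Measurable ρ) :
    llr (κ.withDensity ρ) κ =ᵐ[κ] fun x ↦ Real.log (ρ x).toReal := by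
  filter_upwards [Measure.rnDeriv_withDensity κ hρ] with x hx
  simp only [llr_def, hx]

lemma llr_ae_eq_add [SigmaFinite μ] [SigmaFinite ν] [SigmaFinite κ] (hμν : μ ≪ ν)
    (hνκ : ν ≪ κ) :
    llr μ κ =ᵐ[μ] llr μ ν + llr ν κ := by
  filter_upwards [(hμν.trans hνκ).ae_le (Measure.rnDeriv_mul_rnDeriv (κ := κ) hμν),
    Measure.rnDeriv_pos hμν, hμν.ae_le (Measure.rnDeriv_lt_top μ ν),
    hμν.ae_le (Measure.rnDeriv_pos hνκ), (hμν.trans hνκ).ae_le (Measure.rnDeriv_lt_top ν κ)]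
    with x hmul hμν_pos hμν_lt hνκ_pos hνκ_lt
  simp only [Pi.add_apply, llr_def, ← hmul, Pi.mul_apply, ENNReal.toReal_mul]
  exact Real.log_mul (ENNReal.toReal_pos hμν_pos.ne' hμν_lt.ne).ne'
    (ENNReal.toReal_pos hνκ_pos.ne' hνκ_lt.ne).ne'

theorem klDiv_eq_add_of_trim_eq (hm : m ≤ m0) [IsFiniteMeasure μ] [IsFiniteMeasure ν]
    [IsFiniteMeasure κ] (hρ : Measurable[m] ρ) (hν : ν = κ.withDensity ρ) (hμν : μ ≪ ν)
    (htrim : μ.trim hm = ν.trim hm) :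
    klDiv μ κ = klDiv μ ν + klDiv ν κ := by
  have hνκ : ν ≪ κ := hν ▸ withDensity_absolutelyContinuous κ ρ
  have hμκ : μ ≪ κ := hμν.trans hνκ
  have hsplit := llr_ae_eq_add hμν hνκ
  have hlog : llr ν κ =ᵐ[κ] fun x ↦ Real.log (ρ x).toReal :=
    hν ▸ llr_withDensity_ae_eq (hρ.mono hm le_rfl)
  have hlog_sm : StronglyMeasurable[m] fun x ↦ Real.log (ρ x).toReal :=
    hρ.ennreal_toReal.log.stronglyMeasurable
  have hint_iff : Integrable (llr ν κ) μ ↔ Integrable (llr ν κ) ν := by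
    rw [integrable_congr (hμκ.ae_eq hlog), integrable_congr (hνκ.ae_eq hlog)]
    exact integrable_iff_of_trim_eq hm htrim hlog_sm
  have hintegral : ∫ x, llr ν κ x ∂μ = ∫ x, llr ν κ x ∂ν := by
    rw [integral_congr_ae (hμκ.ae_eq hlog), integral_congr_ae (hνκ.ae_eq hlog)]
    exact integral_eq_of_trim_eq hm htrim hlog_sm
  by_cases hμκ_int : Integrable (llr μ κ) μ
  · have hνκ_int : Integrable (llr ν κ) ν := by
      by_contra h
      have hle := klDiv_le_of_trim_eq hm hρ hν htrim
      rw [klDiv_of_not_integrable h, top_le_iff] at hle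
      exact klDiv_ne_top hμκ hμκ_int hle
    have hμν_int : Integrable (llr μ ν) μ :=
      (hμκ_int.sub (hint_iff.2 hνκ_int)).congr <| by
        filter_upwards [hsplit] with x hx
        simp [hx]
    rw [klDiv_of_ac_of_integrable hμκ hμκ_int, klDiv_of_ac_of_integrable hμν hμν_int,
      klDiv_of_ac_of_integrable hνκ hνκ_int,
      ← ENNReal.ofReal_add (integral_llr_add_sub_measure_univ_nonneg hμν hμν_int)
        (integral_llr_add_sub_measure_univ_nonneg hνκ hνκ_int),
      integral_congr_ae hsplit, integral_add' hμν_int (hint_iff.2 hνκ_int), hintegral]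
    ring_nf
  · rw [klDiv_of_not_integrable hμκ_int]
    have : ¬ (Integrable (llr μ ν) μ ∧ Integrable (llr ν κ) ν) := fun ⟨h₁, h₂⟩ ↦
      hμκ_int ((h₁.add (hint_iff.2 h₂)).congr hsplit.symm)
    rcases not_and_or.1 this with h | h <;> simp [klDiv_of_not_integrable h]

end InformationTheory

lemma klDiv_eq_coe_klDiv {α : Type*} [MeasurableSpace α] (ν₁ ν₂ : Measure α)
    [IsProbabilityMeasure ν₁] [IsProbabilityMeasure ν₂] :
    klDiv ν₁ ν₂ = (InformationTheory.klDiv ν₁ ν₂ : EReal) := by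
  rw [klDiv]
  split_ifs with h
  · rw [InformationTheory.klDiv_of_ac_of_integrable h.1 h.2, EReal.coe_ennreal_ofReal]
    have := InformationTheory.integral_llr_add_sub_measure_univ_nonneg h.1 h.2
    simp only [probReal_univ, add_sub_cancel_right] at this ⊢
    rw [max_eq_left this]
    rfl
  · rcases not_and_or.1 h with h | h
    · simp [InformationTheory.klDiv_of_not_ac h]
    · simp [InformationTheory.klDiv_of_not_integrable (μ := ν₁) (ν := ν₂) h]

section NormWithDensity

variable {α : Type*} [MeasurableSpace α] {μ : Measure α} {f g : α → ℝ} {s : Set α}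

lemma normWithDensity_apply (hf0 : 0 ≤ᵐ[μ] f) (hfi : Integrable f μ) (hs : MeasurableSet s) :
    normWithDensity μ f s =
      (ENNReal.ofReal (∫ x, f x ∂μ))⁻¹ * ENNReal.ofReal (∫ x in s, f x ∂μ) := by
  rw [normWithDensity, Measure.smul_apply, withDensity_apply _ hs, smul_eq_mul,
    ofReal_integral_eq_lintegral_ofReal hfi.restrict (ae_restrict_of_ae hf0)]

lemma isProbabilityMeasure_normWithDensity (hf0 : 0 ≤ᵐ[μ] f) (hfpos : 0 < ∫ x, f x ∂μ) :
    IsProbabilityMeasure (normWithDensity μ f) := by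
  constructor
  rw [normWithDensity_apply hf0 (.of_integral_ne_zero hfpos.ne') .univ, setIntegral_univ,
    ENNReal.inv_mul_cancel (ENNReal.ofReal_pos.2 hfpos).ne' ENNReal.ofReal_ne_top]

lemma normWithDensity_eq_withDensity (hf : Measurable f) (hg : Measurable g) (hg0 : 0 ≤ᵐ[μ] g)
    (hgpos : 0 < ∫ x, g x ∂μ) (hfg : ∀ᵐ x ∂μ, g x = 0 → f x = 0) :
    normWithDensity μ f = (normWithDensity μ g).withDensity fun x ↦
      ENNReal.ofReal (∫ x, g x ∂μ) / ENNReal.ofReal (∫ x, f x ∂μ) *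
        (ENNReal.ofReal (f x) / ENNReal.ofReal (g x)) := by
  set Zf := ENNReal.ofReal (∫ x, f x ∂μ)
  set Zg := ENNReal.ofReal (∫ x, g x ∂μ)
  have hZg : Zg ≠ 0 := (ENNReal.ofReal_pos.2 hgpos).ne'
  have hdens : (fun x ↦ ENNReal.ofReal (g x)) * (fun x ↦ Zg / Zf *
      (ENNReal.ofReal (f x) / ENNReal.ofReal (g x))) =ᵐ[μ]
        (Zg / Zf) • fun x ↦ ENNReal.ofReal (f x) := by
    filter_upwards [hg0, hfg] with x hx0 hx
    rcases hx0.eq_or_lt with hx0 | hx0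
    · simp [← hx0, hx hx0.symm]
    · simp only [Pi.mul_apply, Pi.smul_apply, smul_eq_mul]
      rw [mul_left_comm,
        ENNReal.mul_div_cancel (ENNReal.ofReal_pos.2 hx0).ne' ENNReal.ofReal_ne_top]
  calc normWithDensity μ f = (Zg⁻¹ * (Zg / Zf)) • μ.withDensity fun x ↦ ENNReal.ofReal (f x) := by
        rw [normWithDensity, div_eq_mul_inv, ← mul_assoc,
          ENNReal.inv_mul_cancel hZg ENNReal.ofReal_ne_top, one_mul]
    _ = Zg⁻¹ • μ.withDensity ((fun x ↦ ENNReal.ofReal (g x)) * fun x ↦ Zg / Zf *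
          (ENNReal.ofReal (f x) / ENNReal.ofReal (g x))) := by
        rw [withDensity_congr_ae hdens, withDensity_smul _ hf.ennreal_ofReal, smul_smul]
    _ = _ := by
        rw [withDensity_mul _ hg.ennreal_ofReal (by fun_prop), normWithDensity,
          withDensity_smul_measure]

lemma normWithDensity_absolutelyContinuous_iff (hf : Measurable f) (hg : Measurable g)
    (hf0 : 0 ≤ᵐ[μ] f) (hg0 : 0 ≤ᵐ[μ] g) (hfpos : 0 < ∫ x, f x ∂μ) (hgpos : 0 < ∫ x, g x ∂μ) :
    normWithDensity μ f ≪ normWithDensity μ g ↔ ∀ᵐ x ∂μ, g x = 0 → f x = 0 := by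
  refine ⟨fun hfg ↦ ?_, fun hfg ↦ ?_⟩
  · have hs : MeasurableSet {x | g x = 0} := hg (measurableSet_singleton 0)
    have hfi : Integrable f μ := .of_integral_ne_zero hfpos.ne'
    have hgs : normWithDensity μ g {x | g x = 0} = 0 := by
      rw [normWithDensity_apply hg0 (.of_integral_ne_zero hgpos.ne') hs,
        setIntegral_congr_fun hs fun x hx ↦ hx]
      simp
    have hfs := hfg hgs
    rw [normWithDensity_apply hf0 hfi hs, mul_eq_zero, ENNReal.inv_eq_zero,
      ENNReal.ofReal_eq_zero, or_iff_right ENNReal.ofReal_ne_top] at hfs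
    have hf0s : 0 ≤ᵐ[μ.restrict {x | g x = 0}] f := ae_restrict_of_ae hf0
    have := (setIntegral_eq_zero_iff_of_nonneg_ae hf0s hfi.integrableOn).1
      (hfs.antisymm (integral_nonneg_of_ae hf0s))
    exact (ae_restrict_iff' hs).1 this
  · rw [normWithDensity_eq_withDensity hf hg hg0 hgpos hfg]
    exact withDensity_absolutelyContinuous _ _

end NormWithDensity

section CondExp

variable {α : Type*} {m m0 : MeasurableSpace α} {μ : Measure α} [IsFiniteMeasure μ] {f : α → ℝ}
  {s : Set α}

lemma ae_mem_imp_eq_zero_iff_condExp (hm : m ≤ m0) (hf0 : 0 ≤ᵐ[μ] f) (hfi : Integrable f μ)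
    (hs : MeasurableSet[m] s) :
    (∀ᵐ x ∂μ, x ∈ s → f x = 0) ↔ ∀ᵐ x ∂μ, x ∈ s → μ[f|m] x = 0 := by
  rw [← ae_restrict_iff' (hm s hs), ← ae_restrict_iff' (hm s hs)]
  change f =ᵐ[μ.restrict s] 0 ↔ μ[f|m] =ᵐ[μ.restrict s] 0
  rw [← setIntegral_eq_zero_iff_of_nonneg_ae (ae_restrict_of_ae hf0) hfi.integrableOn,
    ← setIntegral_eq_zero_iff_of_nonneg_ae (ae_restrict_of_ae (condExp_nonneg hf0))
      integrable_condExp.integrableOn, setIntegral_condExp hm hfi hs]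

lemma trim_normWithDensity_condExp (hm : m ≤ m0) (hf0 : 0 ≤ᵐ[μ] f) (hfi : Integrable f μ) :
    (normWithDensity μ f).trim hm = (normWithDensity μ (μ[f|m])).trim hm := by
  refine @Measure.ext α m _ _ fun s hs ↦ ?_
  rw [trim_measurableSet_eq hm hs, trim_measurableSet_eq hm hs,
    normWithDensity_apply hf0 hfi (hm s hs),
    normWithDensity_apply (condExp_nonneg hf0) integrable_condExp (hm s hs),
    setIntegral_condExp hm hfi hs, integral_condExp hm]

end CondExp

namespace InformationTheory

variable {α : Type*} {m m0 : MeasurableSpace α}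

theorem klDiv_normWithDensity_eq_add_condExp (hm : m ≤ m0) (μ : Measure α) [IsFiniteMeasure μ]
    {f g : α → ℝ} (hf : Measurable f) (hf0 : 0 ≤ᵐ[μ] f) (hfpos : 0 < ∫ x, f x ∂μ)
    (hg : Measurable[m] g) (hg0 : 0 ≤ᵐ[μ] g) (hgpos : 0 < ∫ x, g x ∂μ) :
    klDiv (normWithDensity μ f) (normWithDensity μ g) =
      klDiv (normWithDensity μ f) (normWithDensity μ (μ[f|m])) +
        klDiv (normWithDensity μ (μ[f|m])) (normWithDensity μ g) := by
  have hfi : Integrable f μ := .of_integral_ne_zero hfpos.ne'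
  have hE : StronglyMeasurable[m] (μ[f|m]) := stronglyMeasurable_condExp
  have hE' : Measurable (μ[f|m]) := hE.measurable.mono hm le_rfl
  have hg' : Measurable g := hg.mono hm le_rfl
  have hE0 : 0 ≤ᵐ[μ] μ[f|m] := condExp_nonneg hf0
  have hEpos : 0 < ∫ x, (μ[f|m]) x ∂μ := by rwa [integral_condExp hm]
  by_cases hac : ∀ᵐ x ∂μ, g x = 0 → μ[f|m] x = 0
  · have := isProbabilityMeasure_normWithDensity hf0 hfpos
    have := isProbabilityMeasure_normWithDensity hE0 hEpos
    have := isProbabilityMeasure_normWithDensity hg0 hgpos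
    have hfE : ∀ᵐ x ∂μ, μ[f|m] x = 0 → f x = 0 :=
      (ae_mem_imp_eq_zero_iff_condExp hm hf0 hfi (hE.measurable (measurableSet_singleton 0))).2
        (ae_of_all _ fun _ ↦ id)
    refine klDiv_eq_add_of_trim_eq hm ?_ (normWithDensity_eq_withDensity hE' hg' hg0 hgpos hac)
      ((normWithDensity_absolutelyContinuous_iff hf hE' hf0 hE0 hfpos hEpos).2 hfE)
      (trim_normWithDensity_condExp hm hf0 hfi)
    exact measurable_const.mul (hE.measurable.ennreal_ofReal.div hg.ennreal_ofReal)
  · have hEg : ¬ normWithDensity μ (μ[f|m]) ≪ normWithDensity μ g := by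
      rwa [normWithDensity_absolutelyContinuous_iff hE' hg' hE0 hg0 hEpos hgpos]
    have hfg : ¬ normWithDensity μ f ≪ normWithDensity μ g := by
      rw [normWithDensity_absolutelyContinuous_iff hf hg' hf0 hg0 hfpos hgpos]
      exact fun h ↦ hac
        ((ae_mem_imp_eq_zero_iff_condExp hm hf0 hfi (hg (measurableSet_singleton 0))).1 h)
    simp [klDiv_of_not_ac hEg, klDiv_of_not_ac hfg]

end InformationTheory

theorem kl_decomposition_and_optimal_profile_general (d : ℕ) (μ : Measure (Fin d → ℝ))
    [IsProbabilityMeasure μ]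
    (f : (Fin d → ℝ) → ℝ) (hf : Measurable f) (hf0 : ∀ x, 0 ≤ f x)
    (hfpos : 0 < ∫ x, f x ∂μ)
    (P : Matrix (Fin d) (Fin d) ℝ) :
    ∀ g : (Fin d → ℝ) → ℝ, Measurable g → (∀ x, 0 ≤ g x) →
      0 < ∫ x, g (P.mulVec x) ∂μ → Integrable (fun x => g (P.mulVec x)) μ →
      (klDiv (normWithDensity μ f) (normWithDensity μ (fun x => g (P.mulVec x)))
          = klDiv (normWithDensity μ f)
              (normWithDensity μ
                (μ[f| MeasurableSpace.comap (fun x => P.mulVec x)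
                      (inferInstance : MeasurableSpace (Fin d → ℝ))]))
            + klDiv (normWithDensity μ
                (μ[f| MeasurableSpace.comap (fun x => P.mulVec x)
                      (inferInstance : MeasurableSpace (Fin d → ℝ))]))
                (normWithDensity μ (fun x => g (P.mulVec x)))) ∧
      klDiv (normWithDensity μ f)
          (normWithDensity μ
            (μ[f| MeasurableSpace.comap (fun x => P.mulVec x)
                  (inferInstance : MeasurableSpace (Fin d → ℝ))]))
        ≤ klDiv (normWithDensity μ f)
            (normWithDensity μ (fun x => g (P.mulVec x))) := by
  intro g hg hg0 hgpos _
  have hP : Measurable fun x : Fin d → ℝ ↦ P *ᵥ x := by fun_prop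
  have hf0 : 0 ≤ᵐ[μ] f := ae_of_all _ hf0
  have hg0 : 0 ≤ᵐ[μ] fun x ↦ g (P *ᵥ x) := ae_of_all _ fun x ↦ hg0 _
  have := isProbabilityMeasure_normWithDensity hf0 hfpos
  have := isProbabilityMeasure_normWithDensity hg0 hgpos
  have := isProbabilityMeasure_normWithDensity (condExp_nonneg (m := .comap _ _) hf0)
    (by rwa [integral_condExp hP.comap_le])
  simp only [klDiv_eq_coe_klDiv, InformationTheory.klDiv_normWithDensity_eq_add_condExp
    hP.comap_le μ hf hf0 hfpos (g := fun x ↦ g (P *ᵥ x)) (hg.comp (comap_measurable _)) hg0 hgpos]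
  exact ⟨EReal.coe_ennreal_add _ _, EReal.coe_ennreal_le_coe_ennreal_iff.2 le_self_add⟩

/-- **Decomposition and optimality of the conditional-expectation profile.**
With `dν/dμ ∝ f`, `dν_r/dμ ∝ g ∘ P_r` and `dν_r*/dμ ∝ E_μ(f | σ(P_r))`, one has
`D_KL(ν‖ν_r) = D_KL(ν‖ν_r*) + D_KL(ν_r*‖ν_r)`, hence `D_KL(ν‖ν_r) ≥ D_KL(ν‖ν_r*)`
for every Borel `g : ℝ^d → ℝ₊`; so any `g*` with `g* ∘ P_r = E_μ(f|σ(P_r))`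
minimizes `g ↦ D_KL(ν‖ν_r)`. -/
theorem kl_decomposition_and_optimal_profile (d : ℕ) (μ : Measure (Fin d → ℝ))
    [IsProbabilityMeasure μ]
    (f : (Fin d → ℝ) → ℝ) (hf : Measurable f) (hf0 : ∀ x, 0 ≤ f x)
    (hfpos : 0 < ∫ x, f x ∂μ) (hfInt : Integrable f μ)
    (P : Matrix (Fin d) (Fin d) ℝ) (hP : P * P = P) :
    ∀ g : (Fin d → ℝ) → ℝ, Measurable g → (∀ x, 0 ≤ g x) →
      0 < ∫ x, g (P.mulVec x) ∂μ → Integrable (fun x => g (P.mulVec x)) μ →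
      (klDiv (normWithDensity μ f) (normWithDensity μ (fun x => g (P.mulVec x)))
          = klDiv (normWithDensity μ f)
              (normWithDensity μ
                (μ[f| MeasurableSpace.comap (fun x => P.mulVec x)
                      (inferInstance : MeasurableSpace (Fin d → ℝ))]))
            + klDiv (normWithDensity μ
                (μ[f| MeasurableSpace.comap (fun x => P.mulVec x)
                      (inferInstance : MeasurableSpace (Fin d → ℝ))]))
                (normWithDensity μ (fun x => g (P.mulVec x)))) ∧
      klDiv (normWithDensity μ f)
          (normWithDensity μ
            (μ[f| MeasurableSpace.comap (fun x => P.mulVec x)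
                  (inferInstance : MeasurableSpace (Fin d → ℝ))]))
        ≤ klDiv (normWithDensity μ f)
            (normWithDensity μ (fun x => g (P.mulVec x))) :=
  kl_decomposition_and_optimal_profile_general d μ f hf hf0 hfpos P
end

section
/- Let Γ ∈ ℝ^{d×d} be symmetric positive definite and H ∈ ℝ^{d×d} symmetric positive semidefinite. Let (λ_i, v_i) be the generalized eigenpairs of the pencil (H, Γ): H v_i = λ_i Γ v_i with λ_1 ≥ λ_2 ≥ … ≥ λ_d ≥ 0 and ‖v_i‖_Γ = 1. Then for any r ≤ d, the minimum of R_Γ(P_r, H) = trace(Γ⁻¹(I_d − P_rᵀ)H(I_d − P_r)) over all rank-r projectors P_r ∈ ℝ^{d×d} equals λ_{r+1} + ⋯ + λ_d, and this minimum is attained by the Γ-orthogonal projector P_r = (Σ_{i=1}^r v_i v_iᵀ) Γ. -/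
/-!
Let `V` be the matrix with columns `v i` and `Λ = diagonal lam`. Then `Vᵀ Γ V = 1`, so `V` is
invertible with inverse `W = Vᵀ Γ`, `Γ⁻¹ = V Vᵀ` and `H = Γ V Λ W`. Conjugating by `V` turns the
error of a projector `P` into `trace (Λ M Mᵀ)` with `M = W (1 - P) V`, again idempotent, of rank
`d - r`. The diagonal of the orthogonal projector onto the range of `M` is bounded by that of
`M Mᵀ` (Bessel's inequality), lies in `[0, 1]` and sums to `d - r`; against the decreasing `lam`
such weights give at least `lam r + ⋯ + lam (d - 1)`. For `P = V diag(1_{i<r}) W` one gets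
`M = diag(1_{i≥r})`, which attains the bound.
-/

open Matrix

/-- The reconstruction error `R_Γ(P, H) = trace(Γ⁻¹ (I − Pᵀ) H (I − P))`. -/
noncomputable def reconErr {d : ℕ} (Γ P H : Matrix (Fin d) (Fin d) ℝ) : ℝ :=
  (Γ⁻¹ * (1 - Pᵀ) * H * (1 - P)).trace

theorem IsIdempotentElem.mul_mul_of_mul_eq_one {M : Type*} [Monoid M] {a b q : M}
    (hq : IsIdempotentElem q) (h : a * b = 1) : IsIdempotentElem (b * q * a) := by
  rw [IsIdempotentElem, show b * q * a * (b * q * a) = b * q * (a * b) * q * a by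
    simp only [mul_assoc], h, mul_one, mul_assoc b, hq.eq]

theorem Finset.sum_le_sum_mul_of_threshold {ι : Type*} [Fintype ι] (s : Finset ι) {f t : ι → ℝ}
    (c : ℝ) (hs : ∀ i ∈ s, f i ≤ c) (hsc : ∀ i ∉ s, c ≤ f i) (ht0 : ∀ i, 0 ≤ t i)
    (ht1 : ∀ i, t i ≤ 1) (hsum : ∑ i, t i = s.card) :
    ∑ i ∈ s, f i ≤ ∑ i, f i * t i := by
  classical
  have key : 0 ≤ ∑ i, (f i - c) * (t i - if i ∈ s then 1 else 0) := by
    refine Finset.sum_nonneg fun i _ => ?_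
    by_cases hi : i ∈ s
    · simpa [hi] using
        mul_nonneg_of_nonpos_of_nonpos (sub_nonpos.2 (hs i hi)) (sub_nonpos.2 (ht1 i))
    · simpa [hi] using mul_nonneg (sub_nonneg.2 (hsc i hi)) (ht0 i)
  have expand : ∑ i, (f i - c) * (t i - if i ∈ s then 1 else 0) =
      ∑ i, f i * t i - ∑ i ∈ s, f i - c * (∑ i, t i - s.card) := by
    simp only [mul_sub, sub_mul, Finset.sum_sub_distrib, mul_ite, mul_one, mul_zero,
      Finset.sum_ite_mem, Finset.univ_inter, ← Finset.mul_sum, Finset.sum_const, nsmul_eq_mul]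
    ring
  rw [expand, hsum, sub_self, mul_zero, sub_zero] at key
  linarith

theorem Fin.card_filter_le_val (d r : ℕ) :
    (Finset.univ.filter (fun i : Fin d => r ≤ (i : ℕ))).card = d - r := by
  simp only [← not_lt, Finset.filter_not, Finset.card_sdiff, Finset.inter_univ,
    Fin.card_filter_val_lt, Finset.card_univ, Fintype.card_fin]
  omega

theorem Matrix.sum_vecMulVec_self_eq {m n R : Type*} [Fintype m] [DecidableEq m] [CommSemiring R]
    (s : Finset m) (v : m → n → R) :
    ∑ i ∈ s, vecMulVec (v i) (v i) =
      (of v)ᵀ * diagonal (fun i => if i ∈ s then (1 : R) else 0) * of v := by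
  ext a b
  simp [mul_apply, sum_apply, vecMulVec_apply, diagonal_apply, ite_mul, Finset.sum_ite_mem]

theorem Matrix.exists_orthonormal_fixed_of_isIdempotentElem {n : Type*} [Fintype n]
    {M : Matrix n n ℝ} (hM : IsIdempotentElem M) :
    ∃ w : Fin M.rank → EuclideanSpace ℝ n, Orthonormal ℝ w ∧ ∀ i, M *ᵥ w i = w i := by
  let K : Submodule ℝ (EuclideanSpace ℝ n) :=
    M.mulVecLin.range.map (WithLp.linearEquiv 2 ℝ (n → ℝ)).symm.toLinearMap
  have hK : Module.finrank ℝ K = M.rank := LinearEquiv.finrank_map_eq _ _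
  let b := (stdOrthonormalBasis ℝ K).reindex (finCongr hK)
  refine ⟨fun i => b i, b.orthonormal.comp_linearIsometry K.subtypeₗᵢ, fun i => ?_⟩
  obtain ⟨_, ⟨y, rfl⟩, hy⟩ := (b i).2
  show M *ᵥ (b i : EuclideanSpace ℝ n).ofLp = (b i : EuclideanSpace ℝ n).ofLp
  rw [← hy]
  show M *ᵥ (M *ᵥ y) = M *ᵥ y
  rw [mulVec_mulVec, hM.eq]

section SquareMatrix

variable {n : Type*} [Fintype n] [DecidableEq n]

theorem Matrix.rank_mul_mul_of_mul_eq_one {K : Type*} [Field K] {A B : Matrix n n K}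
    (h : A * B = 1) (Q : Matrix n n K) : (B * Q * A).rank = Q.rank := by
  rw [rank_mul_eq_left_of_isUnit_det A _ (isUnit_det_of_right_inverse h),
    rank_mul_eq_right_of_isUnit_det B Q (isUnit_det_of_left_inverse h)]

theorem Matrix.rank_one_sub_of_isIdempotentElem {K : Type*} [Field K] {P : Matrix n n K}
    (hP : IsIdempotentElem P) : (1 - P).rank = Fintype.card n - P.rank := by
  have hPlin : IsIdempotentElem P.mulVecLin := by
    rw [IsIdempotentElem, Module.End.mul_eq_comp, ← mulVecLin_mul, hP]
  have hrange : (1 - P).mulVecLin.range = P.mulVecLin.ker := by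
    rw [LinearMap.IsIdempotentElem.ker_eq_range_one_sub hPlin]
    congr 1
    exact LinearMap.ext fun x => by simp
  have := LinearMap.finrank_range_add_finrank_ker P.mulVecLin
  rw [Module.finrank_fintype_fun_eq_card] at this
  rw [rank, hrange, rank]
  omega

theorem Matrix.trace_diagonal_mul {R : Type*} [CommSemiring R] (c : n → R) (A : Matrix n n R) :
    (diagonal c * A).trace = ∑ i, c i * A i i := by
  simp [trace, diagonal_mul]

theorem Matrix.dotProduct_mulVec_eq_add_of_isIdempotentElem {R : Type*} [CommRing R]
    {Γ P : Matrix n n R} (hP : IsIdempotentElem P) (hPΓ : Pᵀ * Γ = Γ * P) (x : n → R) :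
    x ⬝ᵥ Γ *ᵥ x = P *ᵥ x ⬝ᵥ Γ *ᵥ (P *ᵥ x) + (1 - P) *ᵥ x ⬝ᵥ Γ *ᵥ ((1 - P) *ᵥ x) := by
  have quad (A : Matrix n n R) : A *ᵥ x ⬝ᵥ Γ *ᵥ (A *ᵥ x) = x ⬝ᵥ (Aᵀ * Γ * A) *ᵥ x := by
    calc A *ᵥ x ⬝ᵥ Γ *ᵥ (A *ᵥ x) = x ᵥ* Aᵀ ⬝ᵥ Γ *ᵥ (A *ᵥ x) := by rw [vecMul_transpose]
      _ = x ⬝ᵥ Aᵀ *ᵥ (Γ *ᵥ (A *ᵥ x)) := (dotProduct_mulVec _ _ _).symm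
      _ = x ⬝ᵥ (Aᵀ * Γ * A) *ᵥ x := by rw [mulVec_mulVec, mulVec_mulVec, Matrix.mul_assoc]
  have split : Pᵀ * Γ * P + (1 - P)ᵀ * Γ * (1 - P) = Γ := by
    simp only [transpose_sub, transpose_one, Matrix.sub_mul, Matrix.mul_sub, Matrix.one_mul,
      Matrix.mul_one, hPΓ, Matrix.mul_assoc, hP.eq]
    abel
  rw [quad, quad, ← dotProduct_add, ← add_mulVec, split]

theorem Matrix.exists_weights_le_diag_mul_transpose {M : Matrix n n ℝ}
    (hM : IsIdempotentElem M) :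
    ∃ t : n → ℝ, (∀ j, 0 ≤ t j) ∧ (∀ j, t j ≤ 1) ∧ ∑ j, t j = M.rank ∧
      ∀ j, t j ≤ (M * Mᵀ) j j := by
  obtain ⟨w, hw, hMw⟩ := M.exists_orthonormal_fixed_of_isIdempotentElem hM
  have bessel (x : n → ℝ) : ∑ i, (x ⬝ᵥ w i) ^ 2 ≤ x ⬝ᵥ x := by
    have := hw.sum_inner_products_le (WithLp.toLp 2 x) (s := Finset.univ)
    simpa only [Real.norm_eq_abs, sq_abs, ← real_inner_self_eq_norm_sq,
      EuclideanSpace.inner_eq_star_dotProduct, star_trivial] using this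
  -- `t` is the diagonal of the orthogonal projector `∑ i, w i (w i)ᵀ` onto the range of `M`.
  refine ⟨fun j => ∑ i, w i j ^ 2, fun j => by positivity, fun j => ?_, ?_, fun j => ?_⟩
  · simpa using bessel (Pi.single j 1)
  · rw [Finset.sum_comm]
    simp [← EuclideanSpace.real_norm_sq_eq, hw.1]
  · have hrow (i : Fin M.rank) : M j ⬝ᵥ w i = w i j := congrFun (hMw i) j
    have := bessel (M j)
    simp only [hrow] at this
    simpa [mul_apply, dotProduct] using this

variable {Γ V : Matrix n n ℝ}

/-- For `Vᵀ Γ V = 1`, the `Γ`-orthogonal projector onto the span of the columns of `V`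
indexed by `s`. -/
noncomputable def colProj (V Γ : Matrix n n ℝ) (s : Finset n) : Matrix n n ℝ :=
  V * diagonal (fun i => if i ∈ s then 1 else 0) * (Vᵀ * Γ)

theorem isIdempotentElem_colProj (hV : Vᵀ * Γ * V = 1) (s : Finset n) :
    IsIdempotentElem (colProj V Γ s) := by
  have hE : IsIdempotentElem (diagonal fun i => if i ∈ s then (1 : ℝ) else 0) := by
    rw [IsIdempotentElem, diagonal_mul_diagonal]
    congr 1
    ext i
    split_ifs <;> norm_num
  exact hE.mul_mul_of_mul_eq_one hV

theorem rank_colProj (hV : Vᵀ * Γ * V = 1) (s : Finset n) : (colProj V Γ s).rank = s.card := by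
  rw [colProj, rank_mul_mul_of_mul_eq_one hV, rank_diagonal, Fintype.card_subtype]
  simp

theorem colProj_transpose_mul (hΓ : Γᵀ = Γ) (s : Finset n) :
    (colProj V Γ s)ᵀ * Γ = Γ * colProj V Γ s := by
  simp only [colProj, transpose_mul, diagonal_transpose, hΓ, transpose_transpose,
    Matrix.mul_assoc]

end SquareMatrix

section GeneralizedEigenbasis

variable {d : ℕ} {Γ H V : Matrix (Fin d) (Fin d) ℝ} {lam : Fin d → ℝ}

theorem reconErr_eq_trace (hΓ : Γᵀ = Γ) (hV : Vᵀ * Γ * V = 1)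
    (hHV : H * V = Γ * V * diagonal lam) (P : Matrix (Fin d) (Fin d) ℝ) :
    reconErr Γ P H =
      (diagonal lam * ((Vᵀ * Γ * (1 - P) * V) * (Vᵀ * Γ * (1 - P) * V)ᵀ)).trace := by
  have hVW : V * (Vᵀ * Γ) = 1 := mul_eq_one_comm.mp hV
  have hΓinv : Γ⁻¹ = V * Vᵀ := inv_eq_left_inv (by rw [Matrix.mul_assoc, hVW])
  have hH : H = Γ * V * diagonal lam * (Vᵀ * Γ) := by
    rw [← hHV, Matrix.mul_assoc, hVW, Matrix.mul_one]
  calc reconErr Γ P H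
      = (V * Vᵀ * (1 - Pᵀ) * Γ * V * (diagonal lam * (Vᵀ * Γ * (1 - P)))).trace := by
        rw [reconErr, hΓinv, hH]
        simp only [Matrix.mul_assoc]
    _ = (diagonal lam * (Vᵀ * Γ * (1 - P)) * (V * Vᵀ * (1 - Pᵀ) * Γ * V)).trace :=
        trace_mul_comm _ _
    _ = _ := by
        simp only [transpose_mul, transpose_sub, transpose_one, transpose_transpose, hΓ,
          Matrix.mul_assoc]

theorem sum_tail_le_reconErr (hΓ : Γᵀ = Γ) (hV : Vᵀ * Γ * V = 1)
    (hHV : H * V = Γ * V * diagonal lam) (hanti : Antitone lam) (hnonneg : ∀ i, 0 ≤ lam i)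
    {r : ℕ} {P : Matrix (Fin d) (Fin d) ℝ} (hP : IsIdempotentElem P) (hrank : P.rank = r) :
    ∑ i ∈ Finset.univ.filter (fun i : Fin d => r ≤ (i : ℕ)), lam i ≤ reconErr Γ P H := by
  set tail := Finset.univ.filter (fun i : Fin d => r ≤ (i : ℕ))
  set M := Vᵀ * Γ * (1 - P) * V
  have hVW : V * (Vᵀ * Γ) = 1 := mul_eq_one_comm.mp hV
  have hM : IsIdempotentElem M := hP.one_sub.mul_mul_of_mul_eq_one hVW
  have hMrank : M.rank = tail.card := by
    rw [rank_mul_mul_of_mul_eq_one hVW, rank_one_sub_of_isIdempotentElem hP, Fintype.card_fin,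
      hrank, Fin.card_filter_le_val]
  obtain ⟨t, ht0, ht1, htsum, htM⟩ := M.exists_weights_le_diag_mul_transpose hM
  obtain ⟨c, hc_tail, hc_head⟩ : ∃ c, (∀ i ∈ tail, lam i ≤ c) ∧ (∀ i ∉ tail, c ≤ lam i) := by
    by_cases h : r < d
    · refine ⟨lam ⟨r, h⟩, fun i hi => hanti ?_, fun i hi => hanti ?_⟩ <;>
        simp [tail, Fin.le_def] at hi ⊢ <;> omega
    · refine ⟨0, fun i hi => ?_, fun i _ => hnonneg i⟩
      simp [tail] at hi
      omega
  calc ∑ i ∈ tail, lam i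
      ≤ ∑ i, lam i * t i :=
        tail.sum_le_sum_mul_of_threshold c hc_tail hc_head ht0 ht1 (by rw [htsum, hMrank])
    _ ≤ ∑ i, lam i * (M * Mᵀ) i i :=
        Finset.sum_le_sum fun i _ => mul_le_mul_of_nonneg_left (htM i) (hnonneg i)
    _ = reconErr Γ P H := by rw [reconErr_eq_trace hΓ hV hHV, trace_diagonal_mul]

theorem reconErr_colProj (hΓ : Γᵀ = Γ) (hV : Vᵀ * Γ * V = 1)
    (hHV : H * V = Γ * V * diagonal lam) (s : Finset (Fin d)) :
    reconErr Γ (colProj V Γ s) H = ∑ i ∈ sᶜ, lam i := by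
  have hM : Vᵀ * Γ * (1 - colProj V Γ s) * V = diagonal (fun i => if i ∈ s then 0 else 1) := by
    rw [Matrix.mul_sub, Matrix.sub_mul, Matrix.mul_one, hV, colProj,
      show Vᵀ * Γ * (V * diagonal (fun i => if i ∈ s then 1 else 0) * (Vᵀ * Γ)) * V =
        Vᵀ * Γ * V * diagonal (fun i => if i ∈ s then 1 else 0) * (Vᵀ * Γ * V) by
          simp only [Matrix.mul_assoc],
      hV, Matrix.one_mul, Matrix.mul_one, ← diagonal_one, diagonal_sub]
    congr 1
    ext i
    split_ifs <;> norm_num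
  rw [reconErr_eq_trace hΓ hV hHV, hM, diagonal_transpose, diagonal_mul_diagonal,
    diagonal_mul_diagonal, trace_diagonal, ← Fintype.sum_ite_mem sᶜ lam]
  refine Finset.sum_congr rfl fun i _ => ?_
  by_cases hi : i ∈ s <;> simp [hi]

end GeneralizedEigenbasis

theorem optimal_projector_general (d r : ℕ) (hr : r ≤ d)
    (Γ H : Matrix (Fin d) (Fin d) ℝ) (hΓ : Γ.PosDef)
    (lam : Fin d → ℝ) (v : Fin d → Fin d → ℝ)
    (heig : ∀ i, H.mulVec (v i) = lam i • Γ.mulVec (v i))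
    (hdec : ∀ i j : Fin d, i ≤ j → lam j ≤ lam i)
    (hnonneg : ∀ i, 0 ≤ lam i)
    (horth : ∀ i j : Fin d, v i ⬝ᵥ Γ.mulVec (v j) = if i = j then 1 else 0) :
    (∀ P : Matrix (Fin d) (Fin d) ℝ, P * P = P → P.rank = r →
      ∑ i ∈ Finset.univ.filter (fun i : Fin d => r ≤ (i : ℕ)), lam i ≤ reconErr Γ P H) ∧
    (let Pr : Matrix (Fin d) (Fin d) ℝ :=
      (∑ i ∈ Finset.univ.filter (fun i : Fin d => (i : ℕ) < r),
        vecMulVec (v i) (v i)) * Γ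
     Pr * Pr = Pr ∧ Pr.rank = r ∧
      (∀ x : Fin d → ℝ, x ⬝ᵥ Γ.mulVec x =
        (Pr.mulVec x) ⬝ᵥ Γ.mulVec (Pr.mulVec x) +
          ((1 - Pr).mulVec x) ⬝ᵥ Γ.mulVec ((1 - Pr).mulVec x)) ∧
      reconErr Γ Pr H =
        ∑ i ∈ Finset.univ.filter (fun i : Fin d => r ≤ (i : ℕ)), lam i) := by
  set V : Matrix (Fin d) (Fin d) ℝ := (of v)ᵀ
  have hΓsymm : Γᵀ = Γ := isHermitian_iff_isSymm.mp hΓ.isHermitian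
  have hV : Vᵀ * Γ * V = 1 := by
    ext i j
    rw [one_apply, ← horth, dotProduct_mulVec]
    rfl
  have hHV : H * V = Γ * V * diagonal lam := by
    ext j i
    rw [mul_diagonal]
    change (H *ᵥ v i) j = (Γ *ᵥ v i) j * lam i
    rw [heig i, Pi.smul_apply, smul_eq_mul, mul_comm]
  refine ⟨fun P hP hrank => sum_tail_le_reconErr hΓsymm hV hHV hdec hnonneg hP hrank, ?_⟩
  intro Pr
  have hPr : Pr = colProj V Γ (Finset.univ.filter fun i : Fin d => (i : ℕ) < r) := by
    simp only [Pr, sum_vecMulVec_self_eq, colProj, V, transpose_transpose, Matrix.mul_assoc]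
  rw [hPr]
  refine ⟨isIdempotentElem_colProj hV _, ?_, dotProduct_mulVec_eq_add_of_isIdempotentElem
    (isIdempotentElem_colProj hV _) (colProj_transpose_mul hΓsymm _), ?_⟩
  · rw [rank_colProj hV, Fin.card_filter_val_lt, min_eq_right hr]
  · rw [reconErr_colProj hΓsymm hV hHV, Finset.compl_filter]
    simp only [not_lt]

/-- **Optimal projector for the reconstruction error.**
Let `(λ_i, v_i)` be a complete `Γ`-orthonormal system of generalized eigenpairs
of the pencil `(H, Γ)`, `H v_i = λ_i Γ v_i`, ordered decreasingly.  Then for any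
`r ≤ d`, `λ_{r+1} + ⋯ + λ_d` is a lower bound of `R_Γ(P, H)` over all rank-`r`
projectors `P`, and it is attained by the `Γ`-orthogonal projector
`P_r = (Σ_{i≤r} v_i v_iᵀ) Γ`. -/
theorem optimal_projector (d r : ℕ) (hr : r ≤ d)
    (Γ H : Matrix (Fin d) (Fin d) ℝ) (hΓ : Γ.PosDef) (hH : H.PosSemidef)
    (lam : Fin d → ℝ) (v : Fin d → Fin d → ℝ)
    (heig : ∀ i, H.mulVec (v i) = lam i • Γ.mulVec (v i))
    (hdec : ∀ i j : Fin d, i ≤ j → lam j ≤ lam i)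
    (hnonneg : ∀ i, 0 ≤ lam i)
    (horth : ∀ i j : Fin d, v i ⬝ᵥ Γ.mulVec (v j) = if i = j then 1 else 0) :
    (∀ P : Matrix (Fin d) (Fin d) ℝ, P * P = P → P.rank = r →
      ∑ i ∈ Finset.univ.filter (fun i : Fin d => r ≤ (i : ℕ)), lam i ≤ reconErr Γ P H) ∧
    (let Pr : Matrix (Fin d) (Fin d) ℝ :=
      (∑ i ∈ Finset.univ.filter (fun i : Fin d => (i : ℕ) < r),
        vecMulVec (v i) (v i)) * Γ
     Pr * Pr = Pr ∧ Pr.rank = r ∧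
      (∀ x : Fin d → ℝ, x ⬝ᵥ Γ.mulVec x =
        (Pr.mulVec x) ⬝ᵥ Γ.mulVec (Pr.mulVec x) +
          ((1 - Pr).mulVec x) ⬝ᵥ Γ.mulVec ((1 - Pr).mulVec x)) ∧
      reconErr Γ Pr H =
        ∑ i ∈ Finset.univ.filter (fun i : Fin d => r ≤ (i : ℕ)), lam i) :=
  optimal_projector_general d r hr Γ H hΓ lam v heig hdec hnonneg horth
end

section
/- Let μ be a probability distribution on ℝ^d, P_r ∈ ℝ^{d×d} a projector, and μ′ the distribution of the random vector P_r X + (I_d − P_r) Y where X, Y are independent with law μ. Then for any measurable f : ℝ^d → ℝ₊ with ∫ f dμ′ < ∞, the conditional expectation E_{μ′}(f | σ(P_r)) is given μ′-a.e. by the map x ↦ E( f(P_r x + (I_d − P_r) Y) ), where Y ∼ μ. -/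
/-!
Write `T (x, y) = P x + (1 - P) y`, so that `μ'` is the image of `μ ⊗ μ` under `T`.
Since `P` is idempotent, `P (T (x, y)) = P x`: every `σ(P)`-measurable set `P⁻¹ A` pulls back
under `T` to the cylinder `P⁻¹ A × ℝ^d`, and `T (x, y)` depends on `x` only through `P x`.
Fubini on such cylinders shows that `f` and `g x = ∫ f (T (x, y)) dμ(y)` have the same integral
over every `σ(P)`-measurable set, and `g = g ∘ P` is `σ(P)`-measurable, so `g` is the
conditional expectation.
-/

open MeasureTheory Matrix

section FiberRespecting

variable {α β : Type*} {T : α × β → α} {π : α → α}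

theorem preimage_comap_eq_prod [MeasurableSpace α] (hπT : ∀ p, π (T p) = π p.1) {s : Set α}
    (hs : MeasurableSet[MeasurableSpace.comap π ‹_›] s) : T ⁻¹' s = s ×ˢ Set.univ := by
  obtain ⟨A, -, rfl⟩ := hs
  ext p
  simp [hπT p]

theorem apply_apply_eq_of_comp_fst (hπT : ∀ p, π (T p) = π p.1)
    (hTπ : ∀ x y, T (π x, y) = T (x, y)) (x : α) (y y' : β) : T (T (x, y), y') = T (x, y') := by
  rw [← hTπ, hπT, hTπ]

end FiberRespecting

section MapProd

variable {α β E : Type*} [MeasurableSpace α] [MeasurableSpace β]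
  [NormedAddCommGroup E] [NormedSpace ℝ E]
  {μ : Measure α} {ν : Measure β} {T : α × β → α} {π : α → α}

theorem setIntegral_map_prod_of_preimage_eq_prod [SFinite μ] [SFinite ν] (hT : Measurable T)
    {s : Set α} (hs : MeasurableSet s) (hTs : T ⁻¹' s = s ×ˢ Set.univ) {h : α → E}
    (hh : Integrable h ((μ.prod ν).map T)) :
    ∫ x in s, h x ∂(μ.prod ν).map T = ∫ x in s, ∫ y, h (T (x, y)) ∂ν ∂μ := by
  have hhT : Integrable (fun p => h (T p)) (μ.prod ν) :=
    (integrable_map_measure hh.1 hT.aemeasurable).mp hh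
  rw [setIntegral_map hs hh.1 hT.aemeasurable, hTs,
    setIntegral_prod (fun p => h (T p)) hhT.integrableOn, Measure.restrict_univ]

theorem stronglyMeasurable_comap_integral_comp [SFinite ν] (hT : Measurable T)
    (hTπ : ∀ x y, T (π x, y) = T (x, y)) {f : α → E} (hf : StronglyMeasurable f) :
    StronglyMeasurable[MeasurableSpace.comap π ‹_›] fun x => ∫ y, f (T (x, y)) ∂ν := by
  have hg : StronglyMeasurable fun x => ∫ y, f (T (x, y)) ∂ν :=
    (hf.comp_measurable hT).integral_prod_right'
  have hgπ : (fun x => ∫ y, f (T (x, y)) ∂ν) = (fun x => ∫ y, f (T (x, y)) ∂ν) ∘ π := by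
    simp only [Function.comp_def, hTπ]
  rw [hgπ]
  exact hg.comp_measurable (comap_measurable π)

theorem condExp_map_prod_ae_eq_integral [CompleteSpace E] [IsFiniteMeasure μ] [IsProbabilityMeasure ν]
    (hT : Measurable T) (hπ : Measurable π) (hπT : ∀ p, π (T p) = π p.1)
    (hTπ : ∀ x y, T (π x, y) = T (x, y)) {f : α → E} (hf : StronglyMeasurable f)
    (hfi : Integrable f ((μ.prod ν).map T)) :
    ((μ.prod ν).map T)[f | MeasurableSpace.comap π ‹_›]
      =ᵐ[(μ.prod ν).map T] fun x => ∫ y, f (T (x, y)) ∂ν := by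
  set g : α → E := fun x => ∫ y, f (T (x, y)) ∂ν
  have hgm : StronglyMeasurable[MeasurableSpace.comap π ‹_›] g :=
    stronglyMeasurable_comap_integral_comp hT hTπ hf
  have hgT : (fun p => g (T p)) = fun p => g p.1 := by
    simp only [g, apply_apply_eq_of_comp_fst hπT hTπ]
  have hgi : Integrable g ((μ.prod ν).map T) := by
    refine (integrable_map_measure (hgm.mono hπ.comap_le).aestronglyMeasurable
      hT.aemeasurable).mpr ?_
    rw [Function.comp_def, hgT]
    exact ((integrable_map_measure hfi.1 hT.aemeasurable).mp hfi).integral_prod_left.comp_fst ν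
  refine (ae_eq_condExp_of_forall_setIntegral_eq hπ.comap_le hfi
    (fun s _ _ => hgi.integrableOn) (fun s hs _ => ?_) hgm.aestronglyMeasurable).symm
  have hTs := preimage_comap_eq_prod hπT hs
  have hs' := hπ.comap_le s hs
  rw [setIntegral_map_prod_of_preimage_eq_prod hT hs' hTs hgi,
    setIntegral_map_prod_of_preimage_eq_prod hT hs' hTs hfi]
  simp only [g, apply_apply_eq_of_comp_fst hπT hTπ, integral_const, probReal_univ, one_smul]

end MapProd

theorem Matrix.mulVec_mulVec_of_isIdempotentElem {n R : Type*} [Fintype n] [CommRing R]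
    {P : Matrix n n R} (hP : IsIdempotentElem P) (x : n → R) : P *ᵥ (P *ᵥ x) = P *ᵥ x := by
  rw [mulVec_mulVec, hP.eq]

theorem Matrix.mulVec_add_one_sub_mulVec_of_isIdempotentElem {n R : Type*} [Fintype n]
    [DecidableEq n] [CommRing R] {P : Matrix n n R} (hP : IsIdempotentElem P) (x y : n → R) :
    P *ᵥ (P *ᵥ x + (1 - P) *ᵥ y) = P *ᵥ x := by
  rw [mulVec_add, mulVec_mulVec_of_isIdempotentElem hP, mulVec_mulVec, hP.mul_one_sub_self,
    zero_mulVec, add_zero]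

theorem condexp_muPrime_general (d : ℕ) (μ : Measure (Fin d → ℝ)) [IsProbabilityMeasure μ]
    (P : Matrix (Fin d) (Fin d) ℝ) (hP : P * P = P)
    (μ' : Measure (Fin d → ℝ))
    (hμ' : μ' = Measure.map
      (fun p : (Fin d → ℝ) × (Fin d → ℝ) => P.mulVec p.1 + (1 - P).mulVec p.2)
      (μ.prod μ))
    (f : (Fin d → ℝ) → ℝ) (hf : Measurable f)
    (hfInt : Integrable f μ') :
    MeasureTheory.condExp
        (MeasurableSpace.comap (fun x => P.mulVec x)
          (inferInstance : MeasurableSpace (Fin d → ℝ)))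
        μ' f
      =ᵐ[μ'] fun x => ∫ y, f (P.mulVec x + (1 - P).mulVec y) ∂μ := by
  subst hμ'
  have hPm : Measurable fun x : Fin d → ℝ => P *ᵥ x :=
    (continuous_const.matrix_mulVec continuous_id).measurable
  have hQm : Measurable fun x : Fin d → ℝ => (1 - P) *ᵥ x :=
    (continuous_const.matrix_mulVec continuous_id).measurable
  exact condExp_map_prod_ae_eq_integral ((hPm.comp measurable_fst).add (hQm.comp measurable_snd))
    hPm (fun p => mulVec_add_one_sub_mulVec_of_isIdempotentElem hP p.1 p.2)
    (fun x y => congrArg (· + (1 - P) *ᵥ y) (mulVec_mulVec_of_isIdempotentElem hP x))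
    hf.stronglyMeasurable hfInt

/-- **Conditional expectation under `μ'`.**
Let `μ'` be the law of `P_r X + (I − P_r) Y` where `X, Y` are independent with
law `μ`.  Then for any measurable `f : ℝ^d → ℝ₊` with `∫ f dμ' < ∞`,
`E_{μ'}(f | σ(P_r))(x) = E(f(P_r x + (I − P_r) Y))`, `μ'`-a.e. -/
theorem condexp_muPrime (d : ℕ) (μ : Measure (Fin d → ℝ)) [IsProbabilityMeasure μ]
    (P : Matrix (Fin d) (Fin d) ℝ) (hP : P * P = P)
    (μ' : Measure (Fin d → ℝ))
    (hμ' : μ' = Measure.map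
      (fun p : (Fin d → ℝ) × (Fin d → ℝ) => P.mulVec p.1 + (1 - P).mulVec p.2)
      (μ.prod μ))
    (f : (Fin d → ℝ) → ℝ) (hf : Measurable f) (hf0 : ∀ x, 0 ≤ f x)
    (hfInt : Integrable f μ') :
    MeasureTheory.condExp
        (MeasurableSpace.comap (fun x => P.mulVec x)
          (inferInstance : MeasurableSpace (Fin d → ℝ)))
        μ' f
      =ᵐ[μ'] fun x => ∫ y, f (P.mulVec x + (1 - P).mulVec y) ∂μ :=
  condexp_muPrime_general d μ P hP μ' hμ' f hf hfInt
end

section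
/- Assume ρ(x) = exp(−½‖x−m‖²_Γ − Ψ(x)) with Ψ bounded satisfying exp(sup Ψ − inf Ψ) ≤ κ, Γ symmetric positive definite, m ∈ ℝ^d. Let P_r be a ‖·‖_Γ-orthogonal rank-r projector, U_r ∈ ℝ^{d×r} and U_⊥ ∈ ℝ^{d×(d−r)} matrices whose columns form bases of Im(P_r) and Ker(P_r). With C = ∫∫ ρ(U_r ξ_r′ + U_⊥ ξ_⊥′) dξ_r′ dξ_⊥′, define marginals p_⊥(ξ_⊥) = C⁻¹ ∫ ρ(U_r ξ_r′ + U_⊥ ξ_⊥) dξ_r′ and p_r(ξ_r) = C⁻¹ ∫ ρ(U_r ξ_r + U_⊥ ξ_⊥′) dξ_⊥′. Then: (i) κ⁻² p_r(ξ_r) p_⊥(ξ_⊥) ≤ C⁻¹ ρ(U_r ξ_r + U_⊥ ξ_⊥) ≤ κ² p_r(ξ_r) p_⊥(ξ_⊥) for all ξ_r, ξ_⊥; (ii) for every x ∈ ℝ^d, the conditional density p_⊥(ξ_⊥|P_r x) = ρ(P_r x + U_⊥ ξ_⊥)/∫ρ(P_r x + U_⊥ ξ_⊥′)dξ_⊥′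 satisfies κ⁻² p_⊥(ξ_⊥) ≤ p_⊥(ξ_⊥|P_r x) ≤ κ² p_⊥(ξ_⊥); and (iii) χ²( p_⊥(·|P_r x) ‖ p_⊥ ) ≤ κ² − 1. -/
open MeasureTheory Matrix
open scoped ENNReal

/-!
Along `U_r ξ_r + U_⊥ ξ_⊥` the Gaussian factor of `ρ` is a product of a function of `ξ_r` and a
function of `ξ_⊥` (this is the `Γ`-orthogonality of `P_r`), so only `exp (-Ψ)` couples the two
variables. Hence every cross ratio `f x y * f x' y' / (f x y' * f x' y)` of
`f ξ_r ξ_⊥ = ρ (U_r ξ_r + U_⊥ ξ_⊥)` is at most `κ²`. Integrating this inequality in `x'` and `y'`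
compares `C * f x y` with the product of the two marginals in both directions, which is (i);
(ii) is the same comparison divided by the `ξ_⊥`-marginal at `ξ_r`, since `P_r x = U_r ξ_r` for some
`ξ_r`. Finally `p ≤ κ² q` for probability densities gives `χ²(p ‖ q) = ∫ p² / q - 1 ≤ κ² - 1`.
-/

theorem Matrix.PosDef.exists_pos_mul_sq_norm_le {n : Type*} [Fintype n] {M : Matrix n n ℝ}
    (hM : M.PosDef) : ∃ ε > 0, ∀ v : n → ℝ, ε * ‖v‖ ^ 2 ≤ v ⬝ᵥ M *ᵥ v := by
  rcases isEmpty_or_nonempty n with hn | hn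
  · exact ⟨1, one_pos, fun v => by simp [Subsingleton.elim v 0]⟩
  have hcont : Continuous fun v : n → ℝ => v ⬝ᵥ M *ᵥ v := by fun_prop
  obtain ⟨u, hu, hmin⟩ := (isCompact_sphere (0 : n → ℝ) 1).exists_isMinOn
    (NormedSpace.sphere_nonempty.2 zero_le_one) hcont.continuousOn
  have hu0 : u ≠ 0 := ne_zero_of_mem_unit_sphere ⟨u, hu⟩
  refine ⟨u ⬝ᵥ M *ᵥ u, by simpa using hM.dotProduct_mulVec_pos hu0, fun v => ?_⟩
  rcases eq_or_ne v 0 with rfl | hv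
  · simp
  have hv' : 0 < ‖v‖ := norm_pos_iff.2 hv
  have hle : u ⬝ᵥ M *ᵥ u ≤ (‖v‖⁻¹ • v) ⬝ᵥ M *ᵥ (‖v‖⁻¹ • v) :=
    hmin (show ‖v‖⁻¹ • v ∈ Metric.sphere (0 : n → ℝ) 1 by simp [norm_smul, hv'.ne'])
  simp only [mulVec_smul, dotProduct_smul, smul_dotProduct, smul_eq_mul] at hle
  calc u ⬝ᵥ M *ᵥ u * ‖v‖ ^ 2 ≤ ‖v‖⁻¹ * (‖v‖⁻¹ * v ⬝ᵥ M *ᵥ v) * ‖v‖ ^ 2 := by gcongr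
    _ = v ⬝ᵥ M *ᵥ v := by field_simp

theorem Matrix.PosSemidef.dotProduct_mulVec_add_le {n : Type*} [Fintype n] {Γ : Matrix n n ℝ}
    (hΓ : Γ.PosSemidef) (a b : n → ℝ) :
    (a + b) ⬝ᵥ Γ *ᵥ (a + b) ≤ 2 * (a ⬝ᵥ Γ *ᵥ a) + 2 * (b ⬝ᵥ Γ *ᵥ b) := by
  have h := hΓ.dotProduct_mulVec_nonneg (a - b)
  simp only [star_trivial, mulVec_add, mulVec_sub, add_dotProduct, dotProduct_add,
    sub_dotProduct, dotProduct_sub] at h ⊢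
  linarith

theorem integrable_exp_neg_mul_sq_norm {E : Type*} [NormedAddCommGroup E] [NormedSpace ℝ E]
    [FiniteDimensional ℝ E] [MeasurableSpace E] [BorelSpace E] (μ : Measure E)
    [μ.IsAddHaarMeasure] {b : ℝ} (hb : 0 < b) :
    Integrable (fun x => Real.exp (-b * ‖x‖ ^ 2)) μ := by
  rcases subsingleton_or_nontrivial E with hE | hE
  · exact (integrable_const 1).congr (ae_of_all _ fun x => by simp [Subsingleton.elim x 0])
  · rw [integrable_fun_norm_addHaar μ (f := fun y => Real.exp (-b * y ^ 2))]
    refine (integrableOn_rpow_mul_exp_neg_mul_sq hb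
      (s := (Module.finrank ℝ E - 1 : ℕ)) (neg_one_lt_zero.trans_le (Nat.cast_nonneg _))).congr_fun
      (fun y _ => by simp [Real.rpow_natCast]) measurableSet_Ioi

theorem integrable_exp_neg_mul_dotProduct_mulVec_sub {m n : Type*} [Fintype m] [Fintype n]
    {Γ : Matrix m m ℝ} (hΓ : Γ.PosDef) {A : Matrix m n ℝ} (hA : Function.Injective A.mulVec)
    (c : m → ℝ) {a : ℝ} (ha : 0 < a) :
    Integrable fun v => Real.exp (-a * ((A *ᵥ v - c) ⬝ᵥ Γ *ᵥ (A *ᵥ v - c))) := by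
  obtain ⟨ε, hε, hcoer⟩ := (hΓ.conjTranspose_mul_mul_same hA).exists_pos_mul_sq_norm_le
  have hlower : ∀ v, ε / 2 * ‖v‖ ^ 2 - c ⬝ᵥ Γ *ᵥ c ≤ (A *ᵥ v - c) ⬝ᵥ Γ *ᵥ (A *ᵥ v - c) := by
    intro v
    have h := hΓ.posSemidef.dotProduct_mulVec_add_le (A *ᵥ v - c) c
    have hv := hcoer v
    simp only [sub_add_cancel, conjTranspose_eq_transpose_of_trivial, ← mulVec_mulVec,
      dotProduct_mulVec v Aᵀ, vecMul_transpose] at h hv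
    linarith
  refine ((integrable_exp_neg_mul_sq_norm volume (mul_pos ha (half_pos hε))).const_mul
    (Real.exp (a * (c ⬝ᵥ Γ *ᵥ c)))).mono' (by fun_prop) (ae_of_all _ fun v => ?_)
  rw [Real.norm_of_nonneg (Real.exp_pos _).le, ← Real.exp_add]
  gcongr
  nlinarith [hlower v]

theorem integral_pos_of_forall_pos {α : Type*} [MeasurableSpace α] {μ : Measure α} [NeZero μ]
    {f : α → ℝ} (hf : Integrable f μ) (hpos : ∀ a, 0 < f a) : 0 < ∫ a, f a ∂μ := by
  rw [integral_pos_iff_support_of_nonneg (fun a => (hpos a).le) hf,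
    Function.support_eq_univ fun a => (hpos a).ne']
  exact Measure.measure_univ_pos.2 (NeZero.ne μ)

theorem lintegral_chiSq_le {α : Type*} [MeasurableSpace α] {μ : Measure α} {p q : α → ℝ}
    {c : ℝ} (hp : Integrable p μ) (hq : Integrable q μ) (hp1 : ∫ a, p a ∂μ = 1)
    (hq1 : ∫ a, q a ∂μ = 1) (hp0 : ∀ a, 0 ≤ p a) (hq0 : ∀ a, 0 < q a)
    (hpq : ∀ a, p a ≤ c * q a) :
    ∫⁻ a, ENNReal.ofReal ((p a - q a) ^ 2) / ENNReal.ofReal (q a) ∂μ ≤ ENNReal.ofReal (c - 1) := by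
  have hsq_le : ∀ a, p a ^ 2 / q a ≤ c * p a := fun a => by
    rw [div_le_iff₀ (hq0 a)]; nlinarith [hp0 a, hpq a]
  have hsq : Integrable (fun a => p a ^ 2 / q a) μ :=
    (hp.const_mul c).mono' ((hp.aemeasurable.pow_const 2).div hq.aemeasurable).aestronglyMeasurable
      (ae_of_all _ fun a => by
        rw [Real.norm_of_nonneg (div_nonneg (sq_nonneg _) (hq0 a).le)]; exact hsq_le a)
  have hexpand : (fun a => (p a - q a) ^ 2 / q a) = fun a => p a ^ 2 / q a - 2 * p a + q a := by
    ext a; field_simp [(hq0 a).ne']; ring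
  have hsub : Integrable (fun a => p a ^ 2 / q a - 2 * p a) μ := hsq.sub (hp.const_mul 2)
  have hchi : Integrable (fun a => (p a - q a) ^ 2 / q a) μ := by
    rw [hexpand]; exact hsub.add hq
  simp_rw [← ENNReal.ofReal_div_of_pos (hq0 _)]
  rw [← ofReal_integral_eq_lintegral_ofReal hchi
    (ae_of_all _ fun a => div_nonneg (sq_nonneg _) (hq0 a).le)]
  gcongr
  rw [hexpand, integral_add hsub hq, integral_sub hsq (hp.const_mul 2),
    integral_const_mul, hp1, hq1]
  have := integral_mono hsq (hp.const_mul c) hsq_le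
  rw [integral_const_mul, hp1] at this
  linarith

section CrossRatio

variable {X Y : Type*} [MeasurableSpace Y] {ν : Measure Y} {f : X → Y → ℝ} {c : ℝ}

theorem integral_mul_le_of_cross (hcross : ∀ x x' y y', f x y * f x' y' ≤ c * (f x y' * f x' y))
    (hint : ∀ x, Integrable (f x) ν) (x x' : X) (y : Y) :
    (∫ y', f x' y' ∂ν) * f x y ≤ c * ((∫ y', f x y' ∂ν) * f x' y) := by
  rw [← integral_mul_const, ← integral_mul_const, ← integral_const_mul]
  exact integral_mono ((hint x').mul_const _) (((hint x).mul_const _).const_mul c)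
    fun y' => (hcross x' x y' y).trans_eq (by ring)

variable [MeasurableSpace X] {μ : Measure X}

theorem integral_integral_mul_le_of_cross
    (hcross : ∀ x x' y y', f x y * f x' y' ≤ c * (f x y' * f x' y))
    (hint : ∀ x, Integrable (f x) ν) (hint' : ∀ y, Integrable (f · y) μ)
    (hmarg : Integrable (fun x => ∫ y, f x y ∂ν) μ) (x : X) (y : Y) :
    (∫ x', ∫ y', f x' y' ∂ν ∂μ) * f x y ≤ c * ((∫ y', f x y' ∂ν) * ∫ x', f x' y ∂μ) := by
  rw [← integral_mul_const, ← integral_const_mul, ← integral_const_mul]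
  exact integral_mono (hmarg.mul_const _) (((hint' y).const_mul _).const_mul c)
    fun x' => integral_mul_le_of_cross hcross hint x x' y

theorem integral_mul_integral_le_of_cross
    (hcross : ∀ x x' y y', f x y * f x' y' ≤ c * (f x y' * f x' y))
    (hint : ∀ x, Integrable (f x) ν) (hint' : ∀ y, Integrable (f · y) μ)
    (hmarg : Integrable (fun x => ∫ y, f x y ∂ν) μ) (x : X) (y : Y) :
    (∫ y', f x y' ∂ν) * (∫ x', f x' y ∂μ) ≤ c * ((∫ x', ∫ y', f x' y' ∂ν ∂μ) * f x y) := by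
  rw [← integral_const_mul, ← integral_mul_const, ← integral_const_mul]
  exact integral_mono ((hint' y).const_mul _) ((hmarg.mul_const _).const_mul c)
    fun x' => integral_mul_le_of_cross hcross hint x' x y

structure IsProductLike (μ : Measure X) (ν : Measure Y) (c : ℝ) (f : X → Y → ℝ) : Prop where
  pos : ∀ x y, 0 < f x y
  integrable : Integrable (Function.uncurry f) (μ.prod ν)
  integrable_left : ∀ x, Integrable (f x) ν
  integrable_right : ∀ y, Integrable (f · y) μ
  cross_le : ∀ x x' y y', f x y * f x' y' ≤ c * (f x y' * f x' y)

namespace IsProductLike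

theorem of_le_mul {g : X → ℝ} {h : Y → ℝ} (hpos : ∀ x y, 0 < f x y)
    (hcross : ∀ x x' y y', f x y * f x' y' ≤ c * (f x y' * f x' y))
    (hmeas : Measurable (Function.uncurry f)) (hg : Integrable g μ) (hh : Integrable h ν)
    (hle : ∀ x y, f x y ≤ g x * h y) : IsProductLike μ ν c f where
  pos := hpos
  integrable := (hg.mul_prod hh).mono' hmeas.aestronglyMeasurable
    (ae_of_all _ fun z => (Real.norm_of_nonneg (hpos z.1 z.2).le).trans_le (hle z.1 z.2))
  integrable_left x := (hh.const_mul (g x)).mono'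
    (hmeas.comp measurable_prodMk_left).aestronglyMeasurable
    (ae_of_all _ fun y => (Real.norm_of_nonneg (hpos x y).le).trans_le (hle x y))
  integrable_right y := (hg.mul_const (h y)).mono'
    (hmeas.comp measurable_prodMk_right).aestronglyMeasurable
    (ae_of_all _ fun x => (Real.norm_of_nonneg (hpos x y).le).trans_le (hle x y))
  cross_le := hcross

theorem one_le (hf : IsProductLike μ ν c f) (x : X) (y : Y) : 1 ≤ c := by
  have hsq := mul_pos (hf.pos x y) (hf.pos x y)
  exact le_of_mul_le_mul_right ((one_mul _).trans_le (hf.cross_le x x y y)) hsq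

variable [SFinite ν]

theorem integral_integral_pos [NeZero μ] [NeZero ν] (hf : IsProductLike μ ν c f) :
    0 < ∫ x, ∫ y, f x y ∂ν ∂μ :=
  integral_pos_of_forall_pos hf.integrable.integral_prod_left
    fun x => integral_pos_of_forall_pos (hf.integrable_left x) (hf.pos x)

theorem integral_mul_integral_le (hf : IsProductLike μ ν c f) (x : X) (y : Y) :
    (∫ y', f x y' ∂ν) * (∫ x', f x' y ∂μ) ≤ c * ((∫ x', ∫ y', f x' y' ∂ν ∂μ) * f x y) :=
  integral_mul_integral_le_of_cross hf.cross_le hf.integrable_left hf.integrable_right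
    hf.integrable.integral_prod_left x y

theorem integral_integral_mul_le (hf : IsProductLike μ ν c f) (x : X) (y : Y) :
    (∫ x', ∫ y', f x' y' ∂ν ∂μ) * f x y ≤ c * ((∫ y', f x y' ∂ν) * ∫ x', f x' y ∂μ) :=
  integral_integral_mul_le_of_cross hf.cross_le hf.integrable_left hf.integrable_right
    hf.integrable.integral_prod_left x y

theorem marginals_mul_bounds [NeZero μ] [NeZero ν] (hf : IsProductLike μ ν c f) (x : X) (y : Y) :
    let C := ∫ x', ∫ y', f x' y' ∂ν ∂μ
    c⁻¹ * ((C⁻¹ * ∫ y', f x y' ∂ν) * (C⁻¹ * ∫ x', f x' y ∂μ)) ≤ C⁻¹ * f x y ∧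
      C⁻¹ * f x y ≤ c * ((C⁻¹ * ∫ y', f x y' ∂ν) * (C⁻¹ * ∫ x', f x' y ∂μ)) := by
  intro C
  have hC : 0 < C := hf.integral_integral_pos
  have hc : 0 < c := one_pos.trans_le (hf.one_le x y)
  have hlo := hf.integral_mul_integral_le x y
  have hup := hf.integral_integral_mul_le x y
  constructor
  · calc c⁻¹ * ((C⁻¹ * ∫ y', f x y' ∂ν) * (C⁻¹ * ∫ x', f x' y ∂μ))
        = (c⁻¹ * C⁻¹ ^ 2) * ((∫ y', f x y' ∂ν) * ∫ x', f x' y ∂μ) := by ring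
      _ ≤ (c⁻¹ * C⁻¹ ^ 2) * (c * (C * f x y)) := by gcongr
      _ = C⁻¹ * f x y := by field_simp
  · calc C⁻¹ * f x y = C⁻¹ ^ 2 * (C * f x y) := by field_simp
      _ ≤ C⁻¹ ^ 2 * (c * ((∫ y', f x y' ∂ν) * ∫ x', f x' y ∂μ)) := by gcongr
      _ = _ := by ring

theorem conditional_bounds [NeZero μ] [NeZero ν] (hf : IsProductLike μ ν c f) (x : X) (y : Y) :
    let C := ∫ x', ∫ y', f x' y' ∂ν ∂μ
    c⁻¹ * (C⁻¹ * ∫ x', f x' y ∂μ) ≤ f x y / ∫ y', f x y' ∂ν ∧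
      f x y / ∫ y', f x y' ∂ν ≤ c * (C⁻¹ * ∫ x', f x' y ∂μ) := by
  intro C
  have hC : 0 < C := hf.integral_integral_pos
  have hc : 0 < c := one_pos.trans_le (hf.one_le x y)
  have hFr : 0 < ∫ y', f x y' ∂ν := integral_pos_of_forall_pos (hf.integrable_left x) (hf.pos x)
  have hlo := hf.integral_mul_integral_le x y
  have hup := hf.integral_integral_mul_le x y
  rw [le_div_iff₀ hFr, div_le_iff₀ hFr]
  constructor
  · calc c⁻¹ * (C⁻¹ * ∫ x', f x' y ∂μ) * ∫ y', f x y' ∂ν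
        = (c⁻¹ * C⁻¹) * ((∫ y', f x y' ∂ν) * ∫ x', f x' y ∂μ) := by ring
      _ ≤ (c⁻¹ * C⁻¹) * (c * (C * f x y)) := by gcongr
      _ = f x y := by field_simp
  · calc f x y = C⁻¹ * (C * f x y) := by field_simp
      _ ≤ C⁻¹ * (c * ((∫ y', f x y' ∂ν) * ∫ x', f x' y ∂μ)) := by gcongr
      _ = _ := by ring

theorem lintegral_chiSq_conditional_le [SFinite μ] [NeZero μ] [NeZero ν]
    (hf : IsProductLike μ ν c f) (x : X) :
    let C := ∫ x', ∫ y', f x' y' ∂ν ∂μ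
    ∫⁻ y, ENNReal.ofReal ((f x y / (∫ y', f x y' ∂ν) - C⁻¹ * ∫ x', f x' y ∂μ) ^ 2) /
        ENNReal.ofReal (C⁻¹ * ∫ x', f x' y ∂μ) ∂ν ≤ ENNReal.ofReal (c - 1) := by
  intro C
  have hC : 0 < C := hf.integral_integral_pos
  have hFr : 0 < ∫ y', f x y' ∂ν := integral_pos_of_forall_pos (hf.integrable_left x) (hf.pos x)
  refine lintegral_chiSq_le ((hf.integrable_left x).div_const _)
    (hf.integrable.integral_prod_right.const_mul _) ?_ ?_
    (fun y => div_nonneg (hf.pos x y).le hFr.le)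
    (fun y => mul_pos (inv_pos.2 hC)
      (integral_pos_of_forall_pos (hf.integrable_right y) (hf.pos · y)))
    (fun y => (hf.conditional_bounds x y).2)
  · rw [integral_div, div_self hFr.ne']
  · rw [integral_const_mul, ← integral_integral_swap hf.integrable, inv_mul_cancel₀ hC.ne']

end IsProductLike

end CrossRatio

theorem exp_mul_exp_le_of_oscillation {X Y : Type*} (a : X → ℝ) (b : Y → ℝ) {ψ : X → Y → ℝ}
    {κ : ℝ} (hψ : ∀ x y x' y', Real.exp (ψ x y - ψ x' y') ≤ κ) (x x' : X) (y y' : Y) :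
    Real.exp (a x + b y - ψ x y) * Real.exp (a x' + b y' - ψ x' y') ≤
      κ ^ 2 * (Real.exp (a x + b y' - ψ x y') * Real.exp (a x' + b y - ψ x' y)) := by
  calc Real.exp (a x + b y - ψ x y) * Real.exp (a x' + b y' - ψ x' y')
      = Real.exp (ψ x y' - ψ x y) * Real.exp (ψ x' y - ψ x' y') *
          (Real.exp (a x + b y' - ψ x y') * Real.exp (a x' + b y - ψ x' y)) := by
        simp only [← Real.exp_add]; ring_nf
    _ ≤ κ * κ * (Real.exp (a x + b y' - ψ x y') * Real.exp (a x' + b y - ψ x' y)) := by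
        gcongr
        · exact (Real.exp_pos _).le.trans (hψ x y' x y)
        · exact hψ x y' x y
        · exact hψ x' y x' y'
    _ = _ := by ring

theorem dotProduct_mulVec_add_sub_eq {n : Type*} [Fintype n] [DecidableEq n] {Γ P : Matrix n n ℝ}
    (hPorth : ∀ x, x ⬝ᵥ Γ *ᵥ x = P *ᵥ x ⬝ᵥ Γ *ᵥ (P *ᵥ x) + (1 - P) *ᵥ x ⬝ᵥ Γ *ᵥ ((1 - P) *ᵥ x))
    {u v : n → ℝ} (hu : P *ᵥ u = u) (hv : P *ᵥ v = 0) (m : n → ℝ) :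
    (u + v - m) ⬝ᵥ Γ *ᵥ (u + v - m) =
      (u - P *ᵥ m) ⬝ᵥ Γ *ᵥ (u - P *ᵥ m) + (v - (1 - P) *ᵥ m) ⬝ᵥ Γ *ᵥ (v - (1 - P) *ᵥ m) := by
  have hran : P *ᵥ (u + v - m) = u - P *ᵥ m := by
    rw [mulVec_sub, mulVec_add, hu, hv, add_zero]
  have hker : (1 - P) *ᵥ (u + v - m) = v - (1 - P) *ᵥ m := by
    rw [sub_mulVec, one_mulVec, hran, sub_mulVec, one_mulVec]; abel
  rw [hPorth, hran, hker]

theorem mulVec_eq_self_of_mem_range {n R : Type*} [Fintype n] [CommSemiring R]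
    {P : Matrix n n R} (hP : P * P = P) {w : n → R} (hw : w ∈ LinearMap.range P.mulVecLin) :
    P *ᵥ w = w := by
  obtain ⟨z, rfl⟩ := hw
  simp [mulVec_mulVec, hP]

theorem mulVec_mem_span_range_col {m n R : Type*} [Fintype n] [CommSemiring R] (A : Matrix m n R)
    (v : n → R) : A *ᵥ v ∈ Submodule.span R (Set.range A.col) :=
  A.range_mulVecLin ▸ LinearMap.mem_range_self A.mulVecLin v

theorem isProductLike_of_gaussian_perturbation {n k l : Type*} [Fintype n] [DecidableEq n]
    [Fintype k] [Fintype l] {κ : ℝ} {Γ P : Matrix n n ℝ} (hΓ : Γ.PosDef) {m : n → ℝ}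
    {Ψ : (n → ℝ) → ℝ} (hΨmeas : Measurable Ψ) (hΨ : ∀ x y, Real.exp (Ψ x - Ψ y) ≤ κ)
    {ρ : (n → ℝ) → ℝ} (hρ : ∀ x, ρ x = Real.exp (-(1 / 2) * ((x - m) ⬝ᵥ Γ *ᵥ (x - m)) - Ψ x))
    (hPorth : ∀ x, x ⬝ᵥ Γ *ᵥ x = P *ᵥ x ⬝ᵥ Γ *ᵥ (P *ᵥ x) + (1 - P) *ᵥ x ⬝ᵥ Γ *ᵥ ((1 - P) *ᵥ x))
    {A : Matrix n k ℝ} {B : Matrix n l ℝ} (hA : Function.Injective A.mulVec)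
    (hB : Function.Injective B.mulVec) (hPA : ∀ ξ, P *ᵥ (A *ᵥ ξ) = A *ᵥ ξ)
    (hPB : ∀ η, P *ᵥ (B *ᵥ η) = 0) :
    IsProductLike volume volume (κ ^ 2) fun ξ η => ρ (A *ᵥ ξ + B *ᵥ η) := by
  set a : (k → ℝ) → ℝ := fun ξ => -(1 / 2) * ((A *ᵥ ξ - P *ᵥ m) ⬝ᵥ Γ *ᵥ (A *ᵥ ξ - P *ᵥ m))
  set b : (l → ℝ) → ℝ :=
    fun η => -(1 / 2) * ((B *ᵥ η - (1 - P) *ᵥ m) ⬝ᵥ Γ *ᵥ (B *ᵥ η - (1 - P) *ᵥ m))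
  have hsplit : ∀ ξ η, ρ (A *ᵥ ξ + B *ᵥ η) = Real.exp (a ξ + b η - Ψ (A *ᵥ ξ + B *ᵥ η)) := by
    intro ξ η
    rw [hρ, dotProduct_mulVec_add_sub_eq hPorth (hPA ξ) (hPB η)]
    simp only [a, b]
    ring_nf
  have hdom : ∀ ξ η, ρ (A *ᵥ ξ + B *ᵥ η) ≤
      κ * Real.exp (-Ψ 0) * Real.exp (a ξ) * Real.exp (b η) := by
    intro ξ η
    calc ρ (A *ᵥ ξ + B *ᵥ η)
        = Real.exp (Ψ 0 - Ψ (A *ᵥ ξ + B *ᵥ η)) * Real.exp (-Ψ 0) * Real.exp (a ξ) *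
            Real.exp (b η) := by rw [hsplit]; simp only [← Real.exp_add]; ring_nf
      _ ≤ κ * Real.exp (-Ψ 0) * Real.exp (a ξ) * Real.exp (b η) := by gcongr; exact hΨ _ _
  have hρmeas : Measurable ρ := by rw [funext hρ]; fun_prop
  refine .of_le_mul (fun ξ η => by rw [hρ]; exact Real.exp_pos _) (fun ξ ξ' η η' => ?_)
    (hρmeas.comp (by fun_prop))
    ((integrable_exp_neg_mul_dotProduct_mulVec_sub hΓ hA _ one_half_pos).const_mul _)
    (integrable_exp_neg_mul_dotProduct_mulVec_sub hΓ hB _ one_half_pos) hdom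
  simp only [hsplit]
  exact exp_mul_exp_le_of_oscillation a b (ψ := fun ξ η => Ψ (A *ᵥ ξ + B *ᵥ η))
    (fun _ _ _ _ => hΨ _ _) ξ ξ' η η'

theorem gaussian_perturbation_factorization_general (d r : ℕ)
    (κ : ℝ)
    (Γ : Matrix (Fin d) (Fin d) ℝ) (hΓ : Γ.PosDef) (mv : Fin d → ℝ)
    (Ψ : (Fin d → ℝ) → ℝ) (hΨmeas : Measurable Ψ)
    (hΨ : ∀ x y, Real.exp (Ψ x - Ψ y) ≤ κ)
    (ρ : (Fin d → ℝ) → ℝ)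
    (hρ : ∀ x, ρ x =
      Real.exp (-(1 / 2) * ((x - mv) ⬝ᵥ Γ.mulVec (x - mv)) - Ψ x))
    (P : Matrix (Fin d) (Fin d) ℝ) (hP : P * P = P)
    (hPorth : ∀ x : Fin d → ℝ, x ⬝ᵥ Γ.mulVec x =
      (P.mulVec x) ⬝ᵥ Γ.mulVec (P.mulVec x) +
        ((1 - P).mulVec x) ⬝ᵥ Γ.mulVec ((1 - P).mulVec x))
    (Ur : Matrix (Fin d) (Fin r) ℝ) (Uperp : Matrix (Fin d) (Fin (d - r)) ℝ)
    (hUrli : LinearIndependent ℝ (fun j => Urᵀ j))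
    (hUrspan : Submodule.span ℝ (Set.range fun j => Urᵀ j) = LinearMap.range P.mulVecLin)
    (hUperpli : LinearIndependent ℝ (fun j => Uperpᵀ j))
    (hUperpspan : Submodule.span ℝ (Set.range fun j => Uperpᵀ j)
      = LinearMap.ker P.mulVecLin) :
    let C : ℝ := ∫ ξr : Fin r → ℝ, ∫ ξp : Fin (d - r) → ℝ,
      ρ (Ur.mulVec ξr + Uperp.mulVec ξp)
    let pperp : (Fin (d - r) → ℝ) → ℝ := fun ξp =>
      C⁻¹ * ∫ ξr : Fin r → ℝ, ρ (Ur.mulVec ξr + Uperp.mulVec ξp)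
    let pr : (Fin r → ℝ) → ℝ := fun ξr =>
      C⁻¹ * ∫ ξp : Fin (d - r) → ℝ, ρ (Ur.mulVec ξr + Uperp.mulVec ξp)
    let pcond : (Fin d → ℝ) → (Fin (d - r) → ℝ) → ℝ := fun x ξp =>
      ρ (P.mulVec x + Uperp.mulVec ξp) /
        ∫ ξp' : Fin (d - r) → ℝ, ρ (P.mulVec x + Uperp.mulVec ξp')
    (∀ (ξr : Fin r → ℝ) (ξp : Fin (d - r) → ℝ),
      κ⁻¹ ^ 2 * (pr ξr * pperp ξp) ≤ C⁻¹ * ρ (Ur.mulVec ξr + Uperp.mulVec ξp) ∧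
        C⁻¹ * ρ (Ur.mulVec ξr + Uperp.mulVec ξp) ≤ κ ^ 2 * (pr ξr * pperp ξp)) ∧
    (∀ (x : Fin d → ℝ) (ξp : Fin (d - r) → ℝ),
      κ⁻¹ ^ 2 * pperp ξp ≤ pcond x ξp ∧ pcond x ξp ≤ κ ^ 2 * pperp ξp) ∧
    (∀ x : Fin d → ℝ,
      (∫⁻ ξp : Fin (d - r) → ℝ,
          ENNReal.ofReal ((pcond x ξp - pperp ξp) ^ 2) / ENNReal.ofReal (pperp ξp))
        ≤ ENNReal.ofReal (κ ^ 2 - 1)) := by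
  intro C pperp pr pcond
  have hPUr : ∀ ξr, P *ᵥ (Ur *ᵥ ξr) = Ur *ᵥ ξr := fun ξr =>
    mulVec_eq_self_of_mem_range hP (hUrspan ▸ mulVec_mem_span_range_col Ur ξr)
  have hPUperp : ∀ ξp, P *ᵥ (Uperp *ᵥ ξp) = 0 := fun ξp =>
    LinearMap.mem_ker.1 (hUperpspan ▸ mulVec_mem_span_range_col Uperp ξp)
  have hf := isProductLike_of_gaussian_perturbation hΓ hΨmeas hΨ hρ hPorth
    (mulVec_injective_iff.2 hUrli) (mulVec_injective_iff.2 hUperpli) hPUr hPUperp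
  have hPx : ∀ x, ∃ ξr, Ur *ᵥ ξr = P *ᵥ x := fun x =>
    LinearMap.mem_range.1 (Ur.range_mulVecLin.trans hUrspan ▸ LinearMap.mem_range_self _ x)
  refine ⟨fun ξr ξp => ?_, fun x ξp => ?_, fun x => ?_⟩
  · simpa only [inv_pow] using hf.marginals_mul_bounds ξr ξp
  · obtain ⟨ξr, hξr⟩ := hPx x
    simpa only [inv_pow, pcond, ← hξr] using hf.conditional_bounds ξr ξp
  · obtain ⟨ξr, hξr⟩ := hPx x
    simpa only [pcond, ← hξr] using hf.lintegral_chiSq_conditional_le ξr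

/-- **Product-like factorization of a bounded perturbation of a Gaussian.**
Let `ρ(x) = exp(−½‖x−m‖²_Γ − Ψ(x))` with `exp(sup Ψ − inf Ψ) ≤ κ`, let `P_r` be
a `‖·‖_Γ`-orthogonal rank-`r` projector and `U_r, U_⊥` matrices whose columns form
bases of `Im(P_r)` and `Ker(P_r)`.  With the marginals `p_⊥` and `p_r` of
`C⁻¹ρ(U_r ξ_r + U_⊥ ξ_⊥)`: (i) `κ⁻² p_r p_⊥ ≤ C⁻¹ρ ≤ κ² p_r p_⊥`;
(ii) `κ⁻² p_⊥(ξ_⊥) ≤ p_⊥(ξ_⊥|P_r x) ≤ κ² p_⊥(ξ_⊥)` for every `x`; and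
(iii) `χ²(p_⊥(·|P_r x) ‖ p_⊥) ≤ κ² − 1`. -/
theorem gaussian_perturbation_factorization (d r : ℕ) (hr : r ≤ d)
    (κ : ℝ) (hκ : 1 ≤ κ)
    (Γ : Matrix (Fin d) (Fin d) ℝ) (hΓ : Γ.PosDef) (mv : Fin d → ℝ)
    (Ψ : (Fin d → ℝ) → ℝ) (hΨmeas : Measurable Ψ)
    (hΨ : ∀ x y, Real.exp (Ψ x - Ψ y) ≤ κ)
    (ρ : (Fin d → ℝ) → ℝ)
    (hρ : ∀ x, ρ x =
      Real.exp (-(1 / 2) * ((x - mv) ⬝ᵥ Γ.mulVec (x - mv)) - Ψ x))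
    (P : Matrix (Fin d) (Fin d) ℝ) (hP : P * P = P) (hrank : P.rank = r)
    (hPorth : ∀ x : Fin d → ℝ, x ⬝ᵥ Γ.mulVec x =
      (P.mulVec x) ⬝ᵥ Γ.mulVec (P.mulVec x) +
        ((1 - P).mulVec x) ⬝ᵥ Γ.mulVec ((1 - P).mulVec x))
    (Ur : Matrix (Fin d) (Fin r) ℝ) (Uperp : Matrix (Fin d) (Fin (d - r)) ℝ)
    (hUrli : LinearIndependent ℝ (fun j => Urᵀ j))
    (hUrspan : Submodule.span ℝ (Set.range fun j => Urᵀ j) = LinearMap.range P.mulVecLin)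
    (hUperpli : LinearIndependent ℝ (fun j => Uperpᵀ j))
    (hUperpspan : Submodule.span ℝ (Set.range fun j => Uperpᵀ j)
      = LinearMap.ker P.mulVecLin) :
    let C : ℝ := ∫ ξr : Fin r → ℝ, ∫ ξp : Fin (d - r) → ℝ,
      ρ (Ur.mulVec ξr + Uperp.mulVec ξp)
    let pperp : (Fin (d - r) → ℝ) → ℝ := fun ξp =>
      C⁻¹ * ∫ ξr : Fin r → ℝ, ρ (Ur.mulVec ξr + Uperp.mulVec ξp)
    let pr : (Fin r → ℝ) → ℝ := fun ξr =>
      C⁻¹ * ∫ ξp : Fin (d - r) → ℝ, ρ (Ur.mulVec ξr + Uperp.mulVec ξp)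
    let pcond : (Fin d → ℝ) → (Fin (d - r) → ℝ) → ℝ := fun x ξp =>
      ρ (P.mulVec x + Uperp.mulVec ξp) /
        ∫ ξp' : Fin (d - r) → ℝ, ρ (P.mulVec x + Uperp.mulVec ξp')
    (∀ (ξr : Fin r → ℝ) (ξp : Fin (d - r) → ℝ),
      κ⁻¹ ^ 2 * (pr ξr * pperp ξp) ≤ C⁻¹ * ρ (Ur.mulVec ξr + Uperp.mulVec ξp) ∧
        C⁻¹ * ρ (Ur.mulVec ξr + Uperp.mulVec ξp) ≤ κ ^ 2 * (pr ξr * pperp ξp)) ∧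
    (∀ (x : Fin d → ℝ) (ξp : Fin (d - r) → ℝ),
      κ⁻¹ ^ 2 * pperp ξp ≤ pcond x ξp ∧ pcond x ξp ≤ κ ^ 2 * pperp ξp) ∧
    (∀ x : Fin d → ℝ,
      (∫⁻ ξp : Fin (d - r) → ℝ,
          ENNReal.ofReal ((pcond x ξp - pperp ξp) ^ 2) / ENNReal.ofReal (pperp ξp))
        ≤ ENNReal.ofReal (κ ^ 2 - 1)) :=
  gaussian_perturbation_factorization_general d r κ Γ hΓ mv Ψ hΨmeas hΨ ρ hρ P hP hPorth Ur Uperp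
    hUrli hUrspan hUperpli hUperpspan
end
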